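/- arXiv:1610.08231 — 5 statements merged into one kernel-verified Lean document; each statement's English description precedes it below -/
import Mathlib

section
/- Let M be a triangulated category that is a module over a tensor triangulated category (K,⊗,1), and let c : SMod(M) → SMod(M) be an operator that is extensive, order-preserving and of finite type. Then SMod^c(M) is a spectral space, having the collection {U(m) ∩ SMod^c(M)}_{m ∈ M} as a basis of quasi-compact open subspaces. -/
open CategoryTheory CategoryTheory.Limits CategoryTheory.Pretriangulated
open CategoryTheory.MonoidalCategory ZeroObject

universe v u v' u'

/-- The data of the action of a tensor triangulated category `(K,⊗,1)` on a triangulated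
category `M`, recorded on objects together with the unit and shift coherences that we use. -/
structure TTModuleStr (K : Type u) [Category.{v} K] [MonoidalCategory K] [HasShift K ℤ]
    (M : Type u') [Category.{v'} M] [HasShift M ℤ] where
  act : K → M → M
  act_unit : ∀ m : M, Nonempty (act (𝟙_ K) m ≅ m)
  act_unit_shift : ∀ m : M, Nonempty (act ((𝟙_ K)⟦(1 : ℤ)⟧) m ≅ m⟦(1 : ℤ)⟧)
  act_unit_shift_neg : ∀ m : M, Nonempty (act ((𝟙_ K)⟦(-1 : ℤ)⟧) m ≅ m⟦(-1 : ℤ)⟧)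

variable {K : Type u} [Category.{v} K] [MonoidalCategory K] [HasZeroObject K] [Preadditive K]
  [HasShift K ℤ] [∀ n : ℤ, (shiftFunctor K n).Additive] [Pretriangulated K]
variable {M : Type u'} [Category.{v'} M] [HasZeroObject M] [Preadditive M] [HasShift M ℤ]
  [∀ n : ℤ, (shiftFunctor M n).Additive] [Pretriangulated M] [HasBinaryBiproducts M]

/-- A thick `K`-submodule of `M`. -/
structure ThickSubmodule (A : TTModuleStr K M) where
  carrier : Set M
  zero_mem : (0 : M) ∈ carrier
  act_mem : ∀ (a : K) (m : M), m ∈ carrier → A.act a m ∈ carrier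
  biprod_mem_iff : ∀ m m' : M, (m ⊞ m') ∈ carrier ↔ (m ∈ carrier ∧ m' ∈ carrier)
  mem₃_of_dist : ∀ T : Triangle M, T ∈ (distTriang M) →
    T.obj₁ ∈ carrier → T.obj₂ ∈ carrier → T.obj₃ ∈ carrier
  mem₁_of_dist : ∀ T : Triangle M, T ∈ (distTriang M) →
    T.obj₂ ∈ carrier → T.obj₃ ∈ carrier → T.obj₁ ∈ carrier
  mem₂_of_dist : ∀ T : Triangle M, T ∈ (distTriang M) →
    T.obj₁ ∈ carrier → T.obj₃ ∈ carrier → T.obj₂ ∈ carrier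

variable (A : TTModuleStr K M)

instance : SetLike (ThickSubmodule A) M where
  coe N := N.carrier
  coe_injective := by intro N N' h; cases N; cases N'; congr

/-- `U(m) = { N ∈ SMod(M) | m ∈ N }`. -/
def U (m : M) : Set (ThickSubmodule A) := {N : ThickSubmodule A | m ∈ N.carrier}

/-- The topology on `SMod(M)` generated by the subbasis `{U(m)}_{m ∈ M}`. -/
instance : TopologicalSpace (ThickSubmodule A) :=
  TopologicalSpace.generateFrom (Set.range (U A))

/-- The thick `K`-submodule of `M` generated by a set `X` of objects of `M`. -/
def genSub (X : Set M) : ThickSubmodule A where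
  carrier := ⋂ (N : ThickSubmodule A) (_ : X ⊆ N.carrier), N.carrier
  zero_mem := by
    simp only [Set.mem_iInter]; intro N _; exact N.zero_mem
  act_mem := by
    intro a m hm
    simp only [Set.mem_iInter] at hm ⊢
    intro N hN
    exact N.act_mem a m (hm N hN)
  biprod_mem_iff := by
    intro m m'
    simp only [Set.mem_iInter]
    constructor
    · intro h
      exact ⟨fun N hN => ((N.biprod_mem_iff m m').1 (h N hN)).1,
        fun N hN => ((N.biprod_mem_iff m m').1 (h N hN)).2⟩
    · rintro ⟨h1, h2⟩ N hN
      exact (N.biprod_mem_iff m m').2 ⟨h1 N hN, h2 N hN⟩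
  mem₃_of_dist := by
    intro T hT h1 h2
    simp only [Set.mem_iInter] at h1 h2 ⊢
    intro N hN
    exact N.mem₃_of_dist T hT (h1 N hN) (h2 N hN)
  mem₁_of_dist := by
    intro T hT h1 h2
    simp only [Set.mem_iInter] at h1 h2 ⊢
    intro N hN
    exact N.mem₁_of_dist T hT (h1 N hN) (h2 N hN)
  mem₂_of_dist := by
    intro T hT h1 h2
    simp only [Set.mem_iInter] at h1 h2 ⊢
    intro N hN
    exact N.mem₂_of_dist T hT (h1 N hN) (h2 N hN)

/-- The largest thick `K`-submodule: all of `M`. -/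
def topSub : ThickSubmodule A where
  carrier := Set.univ
  zero_mem := trivial
  act_mem := fun _ _ _ => trivial
  biprod_mem_iff := fun _ _ => by simp
  mem₃_of_dist := fun _ _ _ _ => trivial
  mem₁_of_dist := fun _ _ _ _ => trivial
  mem₂_of_dist := fun _ _ _ _ => trivial

/-- An operator on `SMod(M)` is extensive if `N ⊆ c(N)` for all `N`. -/
def Extensive (c : ThickSubmodule A → ThickSubmodule A) : Prop :=
  ∀ N : ThickSubmodule A, N.carrier ⊆ (c N).carrier

/-- An operator on `SMod(M)` is order-preserving if `N ⊆ N'` implies `c(N) ⊆ c(N')`. -/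
def OrderPreserving (c : ThickSubmodule A → ThickSubmodule A) : Prop :=
  ∀ N N' : ThickSubmodule A, N.carrier ⊆ N'.carrier → (c N).carrier ⊆ (c N').carrier

/-- An operator on `SMod(M)` is idempotent if `c(c(N)) = c(N)` for all `N`. -/
def Idempotent (c : ThickSubmodule A → ThickSubmodule A) : Prop :=
  ∀ N : ThickSubmodule A, c (c N) = c N

/-- An operator on `SMod(M)` is of finite type if `c(N) = ⋃_{n ∈ N} c(K(n))`. -/
def FiniteType (c : ThickSubmodule A → ThickSubmodule A) : Prop :=
  ∀ N : ThickSubmodule A,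
    (c N).carrier = ⋃ n ∈ N.carrier, (c (genSub A {n})).carrier

/-- A topological space is spectral if it is quasi-compact, `T0`, sober, and its
quasi-compact open subsets form a basis that is closed under finite intersections. -/
def IsSpectralSpace (X : Type*) [TopologicalSpace X] : Prop :=
  CompactSpace X ∧ T0Space X ∧ QuasiSober X ∧
    TopologicalSpace.IsTopologicalBasis {s : Set X | IsOpen s ∧ IsCompact s} ∧
    ∀ s t : Set X, IsOpen s → IsCompact s → IsOpen t → IsCompact t → IsCompact (s ∩ t)

/-!
The fixed points of `c`, ordered by inclusion, are closed under arbitrary intersections (as `c` is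
extensive and order-preserving) and under unions of families in which any two objects lie in a
common member (as `c` is of finite type). The topology on thick submodules is the one whose
specialization order is reverse inclusion. The first closure property gives each `U(m)` a least
point; every open set containing it contains all of `U(m)`, so `U(m)` is quasi-compact. The second
provides generic points of irreducible closed sets: the union of their members. Finally
`U(m) ∩ U(m') = U(m ⊕ m')`, so the basis is closed under intersections.
-/

open Set Topology TopologicalSpace

namespace ThickSubmodule

variable {A}

omit [Preadditive K] [HasZeroObject K] [∀ n : ℤ, (shiftFunctor K n).Additive] [Pretriangulated K]

instance : PartialOrder (ThickSubmodule A) := .ofSetLike (ThickSubmodule A) M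

lemma le_genSub_iff {X : Set M} {N : ThickSubmodule A} : genSub A X ≤ N ↔ X ⊆ N.carrier := by
  refine ⟨fun h => subset_trans ?_ h, fun h m hm => mem_iInter₂.mp hm N h⟩
  exact fun m hm => mem_iInter₂.mpr fun _ hN => hN hm

lemma subset_genSub (X : Set M) : X ⊆ (genSub A X).carrier :=
  le_genSub_iff.mp le_rfl

variable (A) in
lemma U_zero : U A 0 = univ :=
  eq_univ_of_forall fun N => N.zero_mem

variable (A) in
lemma U_biprod (m m' : M) : U A (m ⊞ m') = U A m ∩ U A m' :=
  ext fun N => N.biprod_mem_iff m m'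

variable (A) in
lemma isTopologicalBasis_range_U : IsTopologicalBasis (range (U A)) :=
  isTopologicalBasis_of_subbasis_of_finiteInter rfl
    { univ_mem := ⟨0, U_zero A⟩
      inter_mem := by
        rintro _ ⟨m, rfl⟩ _ ⟨m', rfl⟩
        exact ⟨m ⊞ m', U_biprod A m m'⟩ }

lemma specializes_iff_le {N N' : ThickSubmodule A} : N ⤳ N' ↔ N' ≤ N := by
  rw [(isTopologicalBasis_range_U A).nhds_hasBasis.specializes_iff]
  constructor
  · exact fun h m hm => h _ ⟨⟨m, rfl⟩, hm⟩
  · rintro h _ ⟨⟨m, rfl⟩, hm⟩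
    exact h hm

lemma specializes_iff_val_le {P : ThickSubmodule A → Prop} {N N' : {N // P N}} :
    N ⤳ N' ↔ N'.val ≤ N.val :=
  (IsInducing.subtypeVal : IsInducing (Subtype.val : {N // P N} → _)).specializes_iff.symm.trans
    specializes_iff_le

instance : T0Space (ThickSubmodule A) :=
  (t0Space_iff_inseparable _).mpr fun _ _ h =>
    le_antisymm (specializes_iff_le.mp h.specializes') (specializes_iff_le.mp h.specializes)

variable (A) in
lemma isTopologicalBasis_preimage_val_U (P : ThickSubmodule A → Prop) :
    IsTopologicalBasis (range fun m : M => (Subtype.val ⁻¹' U A m : Set {N // P N})) := by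
  have h := (isTopologicalBasis_range_U A).isInducing
    (IsInducing.subtypeVal : IsInducing (Subtype.val : {N // P N} → ThickSubmodule A))
  rwa [← range_comp] at h

variable {c : ThickSubmodule A → ThickSubmodule A}

lemma exists_isLeast_fixed (hext : Extensive A c) (hord : OrderPreserving A c) (X : Set M) :
    ∃ N₀, IsLeast {N | c N = N ∧ X ⊆ N.carrier} N₀ := by
  set N₀ := genSub A (⋂ N ∈ {N | c N = N ∧ X ⊆ N.carrier}, N.carrier)
  have hN₀_le : ∀ N, c N = N → X ⊆ N.carrier → N₀ ≤ N := fun N hfix hX =>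
    le_genSub_iff.mpr (biInter_subset_of_mem ⟨hfix, hX⟩)
  have hc_le : c N₀ ≤ N₀ := fun m hm => subset_genSub _ <| mem_iInter₂.mpr
    fun N ⟨hfix, hX⟩ => hfix ▸ hord _ _ (hN₀_le N hfix hX) hm
  refine ⟨N₀, ⟨le_antisymm hc_le (hext N₀), ?_⟩, fun N ⟨hfix, hX⟩ => hN₀_le N hfix hX⟩
  exact subset_trans (subset_iInter₂ fun _ h => h.2) (subset_genSub _)

lemma isCompact_preimage_val_U (hext : Extensive A c) (hord : OrderPreserving A c) (m : M) :
    IsCompact (Subtype.val ⁻¹' U A m : Set {N // c N = N}) := by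
  obtain ⟨N₀, ⟨hfix, hm⟩, hleast⟩ := exists_isLeast_fixed hext hord {m}
  convert (isCompact_singleton (x := (⟨N₀, hfix⟩ : {N // c N = N}))).nhdsKer using 1
  ext N
  rw [mem_nhdsKer_singleton, specializes_iff_val_le]
  exact ⟨fun h => hleast ⟨N.prop, singleton_subset_iff.mpr h⟩, fun h => h (hm rfl)⟩

/-- The union of a family `S` of thick submodules in which any two objects of the union lie in a
common member. -/
def sUnion (S : Set (ThickSubmodule A)) (hS : S.Nonempty)
    (hpair : ∀ m₁ m₂ : M, (S ∩ U A m₁).Nonempty → (S ∩ U A m₂).Nonempty →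
      (S ∩ (U A m₁ ∩ U A m₂)).Nonempty) : ThickSubmodule A where
  carrier := {m | (S ∩ U A m).Nonempty}
  zero_mem := hS.mono fun N hN => ⟨hN, N.zero_mem⟩
  act_mem a m := fun ⟨N, hN, hm⟩ => ⟨N, hN, N.act_mem a m hm⟩
  biprod_mem_iff m m' := by
    simp only [mem_ofPred_eq, U_biprod]
    exact ⟨fun h => ⟨h.mono (inter_subset_inter_right _ inter_subset_left),
      h.mono (inter_subset_inter_right _ inter_subset_right)⟩, fun ⟨h, h'⟩ => hpair m m' h h'⟩
  mem₃_of_dist T hT h₁ h₂ := (hpair _ _ h₁ h₂).imp fun N ⟨hN, hm₁, hm₂⟩ =>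
    ⟨hN, N.mem₃_of_dist T hT hm₁ hm₂⟩
  mem₁_of_dist T hT h₂ h₃ := (hpair _ _ h₂ h₃).imp fun N ⟨hN, hm₂, hm₃⟩ =>
    ⟨hN, N.mem₁_of_dist T hT hm₂ hm₃⟩
  mem₂_of_dist T hT h₁ h₃ := (hpair _ _ h₁ h₃).imp fun N ⟨hN, hm₁, hm₃⟩ =>
    ⟨hN, N.mem₂_of_dist T hT hm₁ hm₃⟩

lemma le_sUnion {S : Set (ThickSubmodule A)} {hS hpair} {N : ThickSubmodule A} (hN : N ∈ S) :
    N ≤ sUnion S hS hpair :=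
  fun _ hm => ⟨N, hN, hm⟩

lemma sUnion_fixed (hext : Extensive A c) (hord : OrderPreserving A c) (hft : FiniteType A c)
    {S : Set (ThickSubmodule A)} {hS hpair} (hfix : ∀ N ∈ S, c N = N) :
    c (sUnion S hS hpair) = sUnion S hS hpair := by
  refine le_antisymm (fun m hm => ?_) (hext _)
  obtain ⟨n, ⟨N, hN, hn⟩, hm⟩ := mem_iUnion₂.mp ((hft _).subset hm)
  have hmN : m ∈ (c N).carrier := hord _ _ (le_genSub_iff.mpr (singleton_subset_iff.mpr hn)) hm
  exact le_sUnion hN (hfix N hN ▸ hmN)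

theorem quasiSober_fixed (hext : Extensive A c) (hord : OrderPreserving A c)
    (hft : FiniteType A c) : QuasiSober {N // c N = N} := by
  refine ⟨fun {S} hirr hclosed => ?_⟩
  have hpair (m₁ m₂ : M) (h₁ : (Subtype.val '' S ∩ U A m₁).Nonempty)
      (h₂ : (Subtype.val '' S ∩ U A m₂).Nonempty) :
      (Subtype.val '' S ∩ (U A m₁ ∩ U A m₂)).Nonempty := by
    obtain ⟨_, ⟨x₁, hx₁, rfl⟩, hm₁⟩ := h₁
    obtain ⟨_, ⟨x₂, hx₂, rfl⟩, hm₂⟩ := h₂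
    obtain ⟨x, hx, hm⟩ := hirr.isPreirreducible _ _
      ((isTopologicalBasis_preimage_val_U A _).isOpen ⟨m₁, rfl⟩)
      ((isTopologicalBasis_preimage_val_U A _).isOpen ⟨m₂, rfl⟩) ⟨x₁, hx₁, hm₁⟩ ⟨x₂, hx₂, hm₂⟩
    exact ⟨x.val, mem_image_of_mem _ hx, hm⟩
  have hne := hirr.nonempty.image Subtype.val
  set T : {N // c N = N} := ⟨sUnion _ hne hpair,
    sUnion_fixed hext hord hft (by rintro _ ⟨x, -, rfl⟩; exact x.prop)⟩
  have hT : T ∈ S := by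
    refine hclosed.closure_subset_iff.mpr subset_rfl <|
      (isTopologicalBasis_preimage_val_U A _).mem_closure_iff.mpr ?_
    rintro _ ⟨m, rfl⟩ ⟨_, ⟨x, hx, rfl⟩, hm⟩
    exact ⟨x, hm, hx⟩
  refine ⟨T, isGenericPoint_iff_specializes.mpr fun x => ⟨fun h => h.mem_closed hclosed hT, ?_⟩⟩
  exact fun hx =>
    specializes_iff_val_le.mpr (le_sUnion (hS := hne) (hpair := hpair) (mem_image_of_mem _ hx))

end ThickSubmodule

open ThickSubmodule in
/-- Theorem 2.5: if `c` is extensive, order-preserving and of finite type, then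
`SMod^c(M)` is a spectral space with `{U(m) ∩ SMod^c(M)}` a basis of quasi-compact opens. -/
theorem statement2 (c : ThickSubmodule A → ThickSubmodule A)
    (hext : Extensive A c) (hord : OrderPreserving A c) (hft : FiniteType A c) :
    IsSpectralSpace {N : ThickSubmodule A // c N = N} ∧
    TopologicalSpace.IsTopologicalBasis
      (Set.range fun m : M =>
        (Subtype.val ⁻¹' U A m : Set {N : ThickSubmodule A // c N = N})) ∧
    (∀ m : M, IsCompact (Subtype.val ⁻¹' U A m : Set {N : ThickSubmodule A // c N = N})) := by
  have hbasis := isTopologicalBasis_preimage_val_U A (fun N => c N = N)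
  have hcompact := isCompact_preimage_val_U hext hord
  have : QuasiSeparatedSpace {N // c N = N} := .of_isTopologicalBasis hbasis fun m m' => by
    simpa only [← preimage_inter, ← U_biprod] using hcompact (m ⊞ m')
  have : CompactSpace {N // c N = N} := ⟨by simpa only [U_zero, preimage_univ] using hcompact 0⟩
  refine ⟨⟨inferInstance, inferInstance, quasiSober_fixed hext hord hft, ?_,
    fun s t hs hsc ht htc => hsc.inter_of_isOpen htc hs ht⟩, hbasis, hcompact⟩
  exact (PrespectralSpace.of_isTopologicalBasis' hbasis hcompact).isTopologicalBasis
end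

section
/- Let M be a triangulated category that is a module over a tensor triangulated category (K,⊗,1), let c : SMod(M) → SMod(M) be an operator that is extensive, order-preserving and of finite type, and let 𝔘 be an ultrafilter on the set SMod^c(M). Then L_𝔘 := {m ∈ M : U(m) ∩ SMod^c(M) ∈ 𝔘} is a thick K-submodule of M. -/
open CategoryTheory CategoryTheory.Limits CategoryTheory.Pretriangulated
open CategoryTheory.MonoidalCategory ZeroObject

universe v u v' u'

variable {K : Type u} [Category.{v} K] [MonoidalCategory K] [HasZeroObject K] [Preadditive K]
  [HasShift K ℤ] [∀ n : ℤ, (shiftFunctor K n).Additive] [Pretriangulated K]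
variable {M : Type u'} [Category.{v'} M] [HasZeroObject M] [Preadditive M] [HasShift M ℤ]
  [∀ n : ℤ, (shiftFunctor M n).Additive] [Pretriangulated M] [HasBinaryBiproducts M]

variable (A : TTModuleStr K M)

/-! Every closure condition of a thick submodule has at most two premises and a filter is closed
under binary intersections, so for any family `N` of thick submodules and any filter `F` the
objects lying eventually in `N i` form a thick submodule. `L_𝔘` is this limit of the inclusion
`SMod^c(M) → SMod(M)` along `𝔘`. -/

namespace ThickSubmodule

variable {A}

def filterLimit {ι : Type*} (F : Filter ι) (N : ι → ThickSubmodule A) : ThickSubmodule A where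
  carrier := {m | ∀ᶠ i in F, m ∈ (N i).carrier}
  zero_mem := .of_forall fun i => (N i).zero_mem
  act_mem a m hm := hm.mono fun i => (N i).act_mem a m
  biprod_mem_iff m m' := by
    simp only [Set.mem_ofPred_eq, ThickSubmodule.biprod_mem_iff, Filter.eventually_and]
  mem₃_of_dist T hT h₁ h₂ := (h₁.and h₂).mono fun i h => (N i).mem₃_of_dist T hT h.1 h.2
  mem₁_of_dist T hT h₂ h₃ := (h₂.and h₃).mono fun i h => (N i).mem₁_of_dist T hT h.1 h.2
  mem₂_of_dist T hT h₁ h₃ := (h₁.and h₃).mono fun i h => (N i).mem₂_of_dist T hT h.1 h.2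

end ThickSubmodule

theorem statement4 (c : ThickSubmodule A → ThickSubmodule A)
    (𝔘 : Ultrafilter {N : ThickSubmodule A // c N = N}) :
    ∃ L : ThickSubmodule A,
      L.carrier = {m : M | {N : {N : ThickSubmodule A // c N = N} | N.1 ∈ U A m} ∈ 𝔘} :=
  ⟨.filterLimit 𝔘.toFilter Subtype.val, rfl⟩
end

section
/- Let M be a triangulated category that is a module over a tensor triangulated category (K,⊗,1), let c : SMod(M) → SMod(M) be an operator that is extensive, order-preserving and of finite type, and let 𝔘 be an ultrafilter on the set SMod^c(M). Then the thick K-submodule L_𝔘 := {m ∈ M : U(m) ∩ SMod^c(M) ∈ 𝔘} is a fixed point of c, i.e. c(L_𝔘) = L_𝔘, so L_𝔘 ∈ SMod^c(M). -/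
open CategoryTheory CategoryTheory.Limits CategoryTheory.Pretriangulated
open CategoryTheory.MonoidalCategory ZeroObject

universe v u v' u'

variable {K : Type u} [Category.{v} K] [MonoidalCategory K] [HasZeroObject K] [Preadditive K]
  [HasShift K ℤ] [∀ n : ℤ, (shiftFunctor K n).Additive] [Pretriangulated K]
variable {M : Type u'} [Category.{v'} M] [HasZeroObject M] [Preadditive M] [HasShift M ℤ]
  [∀ n : ℤ, (shiftFunctor M n).Additive] [Pretriangulated M] [HasBinaryBiproducts M]

variable (A : TTModuleStr K M)

/-! If `m ∈ c(L_𝔘)`, finite type gives `n ∈ L_𝔘` with `m ∈ c(K(n))`. Every fixed point containing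
`n` contains `c(K(n))`, so the set of fixed points containing `m` contains the `𝔘`-large set of
those containing `n`, and `m ∈ L_𝔘`. -/

section

variable {A}

theorem genSub_subset {X : Set M} {N : ThickSubmodule A} (h : X ⊆ N.carrier) :
    (genSub A X).carrier ⊆ N.carrier :=
  fun _ hx => Set.mem_iInter₂.1 hx N h

theorem OrderPreserving.genSub_singleton_subset_of_fixed {c : ThickSubmodule A → ThickSubmodule A}
    (hord : OrderPreserving A c) {N : ThickSubmodule A} (hN : c N = N) {n : M}
    (hn : n ∈ N.carrier) : (c (genSub A {n})).carrier ⊆ N.carrier := by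
  rw [← hN]
  exact hord _ _ (genSub_subset (Set.singleton_subset_iff.2 hn))

theorem FiniteType.exists_witness_of_mem {c : ThickSubmodule A → ThickSubmodule A}
    (hord : OrderPreserving A c) (hft : FiniteType A c) {L : ThickSubmodule A} {m : M}
    (hm : m ∈ (c L).carrier) :
    ∃ n ∈ L.carrier, ∀ N : ThickSubmodule A, c N = N → n ∈ N.carrier → m ∈ N.carrier := by
  rw [hft L] at hm
  obtain ⟨n, hn, hmn⟩ := Set.mem_iUnion₂.1 hm
  exact ⟨n, hn, fun N hN hnN => hord.genSub_singleton_subset_of_fixed hN hnN hmn⟩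

theorem FiniteType.subset_of_carrier_eq_filter {c : ThickSubmodule A → ThickSubmodule A}
    (hord : OrderPreserving A c) (hft : FiniteType A c)
    (F : Filter {N : ThickSubmodule A // c N = N}) {L : ThickSubmodule A}
    (hL : L.carrier = {m : M | {N : {N : ThickSubmodule A // c N = N} | N.1 ∈ U A m} ∈ F}) :
    (c L).carrier ⊆ L.carrier := by
  intro m hm
  obtain ⟨n, hn, hwitness⟩ := hft.exists_witness_of_mem hord hm
  rw [hL] at hn ⊢
  exact F.mem_of_superset hn fun N hnN => hwitness N.1 N.2 hnN

end

/-- Given an ultrafilter `𝔘` on `SMod^c(M)`, the thick `K`-submodule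
`L_𝔘 = { m ∈ M | U(m) ∩ SMod^c(M) ∈ 𝔘 }` is a fixed point of `c`. -/
theorem statement5 (c : ThickSubmodule A → ThickSubmodule A)
    (hext : Extensive A c) (hord : OrderPreserving A c) (hft : FiniteType A c)
    (𝔘 : Ultrafilter {N : ThickSubmodule A // c N = N}) :
    ∀ L : ThickSubmodule A,
      L.carrier = {m : M | {N : {N : ThickSubmodule A // c N = N} | N.1 ∈ U A m} ∈ 𝔘} →
      c L = L := by
  intro L hL
  exact SetLike.coe_injective ((hft.subset_of_carrier_eq_filter hord 𝔘 hL).antisymm (hext L))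
end

section
/- Let M be a triangulated category that is a module over a tensor triangulated category (K,⊗,1), and let 𝔉 be a family of thick K-submodules of M containing M, closed under nonempty intersections and closed under filtered directed unions. Then 𝔉, equipped with the subspace topology from SMod(M), is a spectral space having {U(m) ∩ 𝔉}_{m ∈ M} as a basis of quasi-compact open sets. -/
open CategoryTheory CategoryTheory.Limits CategoryTheory.Pretriangulated
open CategoryTheory.MonoidalCategory ZeroObject

universe v u v' u'

variable {K : Type u} [Category.{v} K] [MonoidalCategory K] [HasZeroObject K] [Preadditive K]
  [HasShift K ℤ] [∀ n : ℤ, (shiftFunctor K n).Additive] [Pretriangulated K]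
variable {M : Type u'} [Category.{v'} M] [HasZeroObject M] [Preadditive M] [HasShift M ℤ]
  [∀ n : ℤ, (shiftFunctor M n).Additive] [Pretriangulated M] [HasBinaryBiproducts M]

variable (A : TTModuleStr K M)

/-!
A member `x` of `𝔉` specializes to `y` exactly when `y ⊆ x`. Every finite `T ⊆ M` lies in a
smallest member `cl T`, so the basic open `{N | T ⊆ N}` is the set of generizations of `cl T`
and is therefore compact; these basic opens are closed under finite intersections, which makes
the space compact, quasi-separated and prespectral. Closure under directed unions makes every
open set inaccessible by directed unions. For an irreducible closed `S`, irreducibility puts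
`cl T` in `S` for each finite `T ⊆ ⋃ S`; the union of this directed family is a member lying in
`S` (the complement of `S` is inaccessible) and containing every member of `S`: a generic point.
-/

open TopologicalSpace Topology Set

theorem SpectralSpace.isSpectralSpace {X : Type*} [TopologicalSpace X] [SpectralSpace X] :
    IsSpectralSpace X :=
  ⟨inferInstance, inferInstance, inferInstance, PrespectralSpace.isTopologicalBasis,
    fun _ _ hs hs' ht ht' => QuasiSeparatedSpace.inter_isCompact _ _ hs hs' ht ht'⟩

section MembershipTopology

variable {X α : Type*} [t : TopologicalSpace X] {c : X → Set α}

abbrev membershipTopology (c : X → Set α) : TopologicalSpace X :=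
  generateFrom (range fun a => {x | a ∈ c x})

theorem isOpen_setOf_mem (htop : t = membershipTopology c) (a : α) :
    IsOpen {x | a ∈ c x} :=
  htop ▸ isOpen_generateFrom_of_mem ⟨a, rfl⟩

theorem specializes_iff_subset (htop : t = membershipTopology c)
    {x y : X} : x ⤳ y ↔ c y ⊆ c x := by
  refine ⟨fun h a ha => h.mem_open (isOpen_setOf_mem htop a) ha, fun h => ?_⟩
  rw [Specializes, htop, membershipTopology, nhds_generateFrom, nhds_generateFrom]
  refine le_iInf₂ fun s hs => ?_
  obtain ⟨hy, a, rfl⟩ := hs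
  exact iInf₂_le _ ⟨h hy, a, rfl⟩

theorem isTopologicalBasis_setOf_finset_subset
    (htop : t = membershipTopology c) :
    IsTopologicalBasis (range fun T : Finset α => {x | ↑T ⊆ c x}) := by
  classical
  refine (isTopologicalBasis_of_subbasis htop).of_isOpen_of_subset ?_ ?_
  · rintro _ ⟨T, rfl⟩
    have hT : {x | ↑T ⊆ c x} = ⋂ a ∈ T, {x | a ∈ c x} := by ext; simp [subset_def]
    simpa only [hT] using isOpen_biInter_finset fun a _ => isOpen_setOf_mem htop a
  · rintro _ ⟨f, ⟨hf, hfs⟩, rfl⟩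
    lift f to Finset (Set X) using hf
    rw [← image_univ] at hfs
    obtain ⟨T, -, rfl⟩ := Finset.subset_set_image_iff.1 hfs
    exact ⟨T, by ext; simp [subset_def]⟩

theorem isCompact_setOf_subset (htop : t = membershipTopology c) (x : X) :
    IsCompact {y | c x ⊆ c y} := by
  have hx : {y | c x ⊆ c y} = nhdsKer {x} := by
    ext y
    rw [mem_nhdsKer_singleton, specializes_iff_subset htop, mem_ofPred_eq]
  exact hx ▸ isCompact_singleton.nhdsKer

theorem isCompact_setOf_finset_subset (htop : t = membershipTopology c)
    {T : Finset α} {x : X} (hx : ∀ y, ↑T ⊆ c y ↔ c x ⊆ c y) : IsCompact {y | ↑T ⊆ c y} := by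
  simpa only [hx] using isCompact_setOf_subset htop x

theorem exists_mem_isOpen_of_eq_biUnion (htop : t = membershipTopology c)
    {O : Set X} (hO : IsOpen O) {G : Set X} (hG : G.Nonempty)
    (hdir : DirectedOn (fun x y => c x ⊆ c y) G) {x : X} (hx : c x = ⋃ g ∈ G, c g)
    (hxO : x ∈ O) : ∃ g ∈ G, g ∈ O := by
  obtain ⟨_, ⟨T, rfl⟩, hxT, hTO⟩ :=
    (isTopologicalBasis_setOf_finset_subset htop).exists_subset_of_mem_open hxO hO
  obtain ⟨g, hg, hTg⟩ := hdir.exists_mem_subset_of_finset_subset_biUnion hG (hx ▸ hxT.out)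
  exact ⟨g, hg, hTO hTg⟩

theorem IsIrreducible.exists_mem_finset_subset
    (htop : t = membershipTopology c) {S : Set X} (hS : IsIrreducible S)
    {T : Finset α} (hT : ↑T ⊆ ⋃ s ∈ S, c s) : ∃ s ∈ S, ↑T ⊆ c s := by
  classical
  obtain ⟨s, hsS, hs⟩ := isIrreducible_iff_sInter.1 hS (T.image fun a => {x | a ∈ c x})
    (by simpa using fun a _ => isOpen_setOf_mem htop a)
    (by simpa [subset_def, inter_nonempty] using hT)
  exact ⟨s, hsS, by simpa [subset_def] using hs⟩

theorem IsIrreducible.exists_mem_eq_biUnion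
    (htop : t = membershipTopology c)
    (hcl : ∀ T : Finset α, ∃ x, ∀ y, ↑T ⊆ c y ↔ c x ⊆ c y)
    (hsup : ∀ G : Set X, G.Nonempty → DirectedOn (fun x y => c x ⊆ c y) G →
      ∃ x, c x = ⋃ g ∈ G, c g)
    {S : Set X} (hS : IsIrreducible S) (hSc : IsClosed S) : ∃ x ∈ S, c x = ⋃ s ∈ S, c s := by
  classical
  choose cl hcl using hcl
  have cl_mono {T T' : Finset α} (h : T ⊆ T') : c (cl T) ⊆ c (cl T') :=
    (hcl T _).1 ((Finset.coe_subset.2 h).trans ((hcl T' _).2 subset_rfl))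
  set G := cl '' {T | ↑T ⊆ ⋃ s ∈ S, c s}
  have hG : G.Nonempty := ⟨cl ∅, ∅, by simp, rfl⟩
  have hGS : G ⊆ S := by
    rintro _ ⟨T, hT, rfl⟩
    obtain ⟨s, hs, hTs⟩ := hS.exists_mem_finset_subset htop hT
    exact ((specializes_iff_subset htop).2 ((hcl T s).1 hTs)).mem_closed hSc hs
  have hGdir : DirectedOn (fun x y => c x ⊆ c y) G := by
    rintro _ ⟨T₁, hT₁, rfl⟩ _ ⟨T₂, hT₂, rfl⟩
    exact ⟨cl (T₁ ∪ T₂), ⟨T₁ ∪ T₂, by simpa using ⟨hT₁, hT₂⟩, rfl⟩,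
      cl_mono Finset.subset_union_left, cl_mono Finset.subset_union_right⟩
  obtain ⟨x, hx⟩ := hsup G hG hGdir
  refine ⟨x, ?_, hx.trans (subset_antisymm (biUnion_mono hGS fun _ _ => subset_rfl) ?_)⟩
  · by_contra hxS
    obtain ⟨g, hg, hgS⟩ :=
      exists_mem_isOpen_of_eq_biUnion htop hSc.isOpen_compl hG hGdir hx hxS
    exact hgS (hGS hg)
  · intro a ha
    exact mem_biUnion ⟨{a}, by simpa using ha, rfl⟩ ((hcl {a} _).2 subset_rfl (by simp))

theorem quasiSober_of_directed_biUnion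
    (htop : t = membershipTopology c)
    (hcl : ∀ T : Finset α, ∃ x, ∀ y, ↑T ⊆ c y ↔ c x ⊆ c y)
    (hsup : ∀ G : Set X, G.Nonempty → DirectedOn (fun x y => c x ⊆ c y) G →
      ∃ x, c x = ⋃ g ∈ G, c g) : QuasiSober X := by
  refine ⟨fun {S} hS hSc => ?_⟩
  obtain ⟨x, hxS, hx⟩ := hS.exists_mem_eq_biUnion htop hcl hsup hSc
  refine ⟨x, isGenericPoint_iff_specializes.2 fun y => ⟨fun h => h.mem_closed hSc hxS, fun hy => ?_⟩⟩
  exact (specializes_iff_subset htop).2 (hx ▸ subset_biUnion_of_mem hy)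

theorem t0Space_of_injective (htop : t = membershipTopology c)
    (hc : Function.Injective c) : T0Space X :=
  (t0Space_iff_inseparable X).2 fun _ _ h => hc <| subset_antisymm
    ((specializes_iff_subset htop).1 h.specializes') ((specializes_iff_subset htop).1 h.specializes)

theorem spectralSpace_of_algebraicClosureSystem
    (htop : t = membershipTopology c) (hc : Function.Injective c)
    (hcl : ∀ T : Finset α, ∃ x, ∀ y, ↑T ⊆ c y ↔ c x ⊆ c y)
    (hsup : ∀ G : Set X, G.Nonempty → DirectedOn (fun x y => c x ⊆ c y) G →
      ∃ x, c x = ⋃ g ∈ G, c g) : SpectralSpace X := by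
  classical
  have hbasis := isTopologicalBasis_setOf_finset_subset htop
  have hcompact (T : Finset α) : IsCompact {x | ↑T ⊆ c x} :=
    isCompact_setOf_finset_subset htop (hcl T).choose_spec
  have : CompactSpace X := ⟨by simpa using hcompact ∅⟩
  have := t0Space_of_injective htop hc
  have := quasiSober_of_directed_biUnion htop hcl hsup
  have : QuasiSeparatedSpace X := .of_isTopologicalBasis hbasis fun T T' => by
    simpa only [← ofPred_and, Finset.coe_union, union_subset_iff] using hcompact (T ∪ T')
  have := PrespectralSpace.of_isTopologicalBasis' hbasis hcompact
  exact {}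

end MembershipTopology

section ClosureSystem

variable {β α : Type*} {c : β → Set α} {𝔉 : Set β}

theorem induced_membershipTopology (c : β → Set α) (𝔉 : Set β) :
    induced ((↑) : 𝔉 → β) (membershipTopology c) = membershipTopology fun x : 𝔉 => c x := by
  rw [membershipTopology, membershipTopology, induced_generateFrom_eq, ← range_comp]
  rfl

theorem exists_least_mem_superset (huniv : ∃ F ∈ 𝔉, c F = univ)
    (hinter : ∀ G ⊆ 𝔉, G.Nonempty → ∃ F ∈ 𝔉, c F = ⋂ N ∈ G, c N) (Y : Set α) :
    ∃ F : 𝔉, ∀ N : 𝔉, Y ⊆ c N ↔ c F ⊆ c N := by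
  obtain ⟨F₀, hF₀, hF₀univ⟩ := huniv
  obtain ⟨F, hF, hFeq⟩ := hinter {N | N ∈ 𝔉 ∧ Y ⊆ c N} (fun _ h => h.1)
    ⟨F₀, hF₀, hF₀univ ▸ subset_univ Y⟩
  have hYF : Y ⊆ c F := hFeq ▸ subset_iInter₂ fun _ hN => hN.2
  exact ⟨⟨F, hF⟩, fun N => ⟨fun hY => hFeq ▸ biInter_subset_of_mem ⟨N.2, hY⟩, hYF.trans⟩⟩

theorem exists_eq_biUnion_of_directedOn
    (hunion : ∀ G ⊆ 𝔉, G.Nonempty → DirectedOn (fun x y => c x ⊆ c y) G →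
      ∃ F ∈ 𝔉, c F = ⋃ N ∈ G, c N)
    (G : Set 𝔉) (hG : G.Nonempty) (hdir : DirectedOn (fun x y : 𝔉 => c x ⊆ c y) G) :
    ∃ F : 𝔉, c F = ⋃ N ∈ G, c N := by
  obtain ⟨F, hF, hFeq⟩ := hunion ((↑) '' G) (by rintro _ ⟨N, -, rfl⟩; exact N.2)
    (hG.image _) ((directedOn_image (f := ((↑) : 𝔉 → β)) (r := fun x y => c x ⊆ c y)).2 hdir)
  exact ⟨⟨F, hF⟩, hFeq.trans biUnion_image⟩

end ClosureSystem

/-- A family `𝔉` of thick `K`-submodules of `M` containing `M`, closed under nonempty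
intersections and under filtered directed unions, is a spectral space (with the subspace
topology from `SMod(M)`) having `{U(m) ∩ 𝔉}` as a basis of quasi-compact open sets. -/
theorem statement10 (𝔉 : Set (ThickSubmodule A)) (hM : topSub A ∈ 𝔉)
    (hint : ∀ G : Set (ThickSubmodule A), G ⊆ 𝔉 → G.Nonempty →
      ∃ F ∈ 𝔉, F.carrier = ⋂ N ∈ G, ThickSubmodule.carrier N)
    (hunion : ∀ G : Set (ThickSubmodule A), G ⊆ 𝔉 → G.Nonempty →
      (∀ N₁ ∈ G, ∀ N₂ ∈ G, ∃ N₃ ∈ G,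
        ThickSubmodule.carrier N₁ ⊆ ThickSubmodule.carrier N₃ ∧
        ThickSubmodule.carrier N₂ ⊆ ThickSubmodule.carrier N₃) →
      ∃ F ∈ 𝔉, F.carrier = ⋃ N ∈ G, ThickSubmodule.carrier N) :
    (IsSpectralSpace {N : ThickSubmodule A // N ∈ 𝔉} ∧
      TopologicalSpace.IsTopologicalBasis
        (Set.range fun m : M =>
          (Subtype.val ⁻¹' U A m : Set {N : ThickSubmodule A // N ∈ 𝔉})) ∧
      (∀ m : M, IsCompact (Subtype.val ⁻¹' U A m : Set {N : ThickSubmodule A // N ∈ 𝔉}))) := by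
  have htop : (inferInstance : TopologicalSpace 𝔉) = membershipTopology fun N : 𝔉 => N.1.carrier :=
    induced_membershipTopology ThickSubmodule.carrier 𝔉
  have hcl (T : Finset M) := exists_least_mem_superset ⟨topSub A, hM, rfl⟩ hint (T : Set M)
  have hinj : Function.Injective fun N : 𝔉 => N.1.carrier :=
    (SetLike.coe_injective (A := ThickSubmodule A)).comp Subtype.val_injective
  have : SpectralSpace 𝔉 := spectralSpace_of_algebraicClosureSystem htop hinj hcl
    (exists_eq_biUnion_of_directedOn hunion)
  refine ⟨SpectralSpace.isSpectralSpace, isTopologicalBasis_of_subbasis_of_finiteInter htop ?_,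
    fun m => ?_⟩
  · refine ⟨⟨0, eq_univ_of_forall fun N => N.1.zero_mem⟩, ?_⟩
    rintro _ ⟨m, rfl⟩ _ ⟨m', rfl⟩
    exact ⟨m ⊞ m', ext fun N => N.1.biprod_mem_iff m m'⟩
  · have := isCompact_setOf_finset_subset htop (hcl {m}).choose_spec
    simp only [Finset.coe_singleton, singleton_subset_iff] at this
    exact this
end

section
/- Let M be a triangulated category that is a module over a tensor triangulated category (K,⊗,1), and let c : SMod(M) → SMod(M) be an operator that is extensive, order-preserving and of finite type. Then the operator c^∞, defined by c^∞(N) := ∪_{i ≥ 0} c^i(N), is of finite type: for every N ∈ SMod(M), c^∞(N) = ∪_{n ∈ N} c^∞(K(n)). -/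
open CategoryTheory CategoryTheory.Limits CategoryTheory.Pretriangulated
open CategoryTheory.MonoidalCategory ZeroObject

universe v u v' u'

variable {K : Type u} [Category.{v} K] [MonoidalCategory K] [HasZeroObject K] [Preadditive K]
  [HasShift K ℤ] [∀ n : ℤ, (shiftFunctor K n).Additive] [Pretriangulated K]
variable {M : Type u'} [Category.{v'} M] [HasZeroObject M] [Preadditive M] [HasShift M ℤ]
  [∀ n : ℤ, (shiftFunctor M n).Additive] [Pretriangulated M] [HasBinaryBiproducts M]

variable (A : TTModuleStr K M)

section

variable {A}

omit [HasZeroObject K] [Preadditive K] [∀ n : ℤ, (shiftFunctor K n).Additive] [Pretriangulated K]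

lemma mem_genSub_self (m : M) : m ∈ (genSub A {m}).carrier :=
  Set.mem_iInter₂.2 fun _ hN => hN rfl

lemma genSub_singleton_subset {m : M} {N : ThickSubmodule A} (hm : m ∈ N.carrier) :
    (genSub A {m}).carrier ⊆ N.carrier :=
  Set.biInter_subset_of_mem (Set.singleton_subset_iff.2 hm)

lemma finiteType_id : FiniteType A id := fun _ =>
  Set.Subset.antisymm (fun m hm => Set.mem_biUnion hm (mem_genSub_self m))
    (Set.iUnion₂_subset fun _ => genSub_singleton_subset)

variable {c d : ThickSubmodule A → ThickSubmodule A}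

lemma OrderPreserving.comp (hc : OrderPreserving A c) (hd : OrderPreserving A d) :
    OrderPreserving A (c ∘ d) :=
  fun _ _ h => hc _ _ (hd _ _ h)

lemma OrderPreserving.iterate (hc : OrderPreserving A c) (i : ℕ) :
    OrderPreserving A c^[i] := by
  induction i with
  | zero => exact fun _ _ h => h
  | succ i ih => rw [Function.iterate_succ']; exact hc.comp ih

lemma OrderPreserving.biUnion_genSub_subset (hc : OrderPreserving A c) (N : ThickSubmodule A) :
    ⋃ n ∈ N.carrier, (c (genSub A {n})).carrier ⊆ (c N).carrier :=
  Set.iUnion₂_subset fun _ hn => hc _ _ (genSub_singleton_subset hn)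

/-- Every `p ∈ d(N)` lies in some `d(K(n))` with `n ∈ N`, so `K(p) ⊆ d(K(n))` and
`c(K(p)) ⊆ c(d(K(n)))`. -/
lemma FiniteType.comp (hc : OrderPreserving A c) (hd : OrderPreserving A d)
    (hcf : FiniteType A c) (hdf : FiniteType A d) : FiniteType A (c ∘ d) := by
  refine fun N => Set.Subset.antisymm ?_ ((hc.comp hd).biUnion_genSub_subset N)
  intro m hm
  rw [Function.comp_apply, hcf, Set.mem_iUnion₂] at hm
  obtain ⟨p, hp, hmp⟩ := hm
  rw [hdf, Set.mem_iUnion₂] at hp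
  obtain ⟨n, hn, hpn⟩ := hp
  exact Set.mem_biUnion hn (hc _ _ (genSub_singleton_subset hpn) hmp)

lemma FiniteType.iterate (hc : OrderPreserving A c) (hcf : FiniteType A c) (i : ℕ) :
    FiniteType A c^[i] := by
  induction i with
  | zero => exact finiteType_id
  | succ i ih => rw [Function.iterate_succ']; exact hcf.comp hc (hc.iterate i) ih

end

theorem statement16 (c : ThickSubmodule A → ThickSubmodule A)
    (hord : OrderPreserving A c) (hft : FiniteType A c)
    (N : ThickSubmodule A) :
    (⋃ i : ℕ, (c^[i] N).carrier) =
      ⋃ n ∈ N.carrier, ⋃ i : ℕ, (c^[i] (genSub A {n})).carrier := by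
  simp_rw [FiniteType.iterate hord hft _ N, Set.iUnion_comm (ι := ℕ)]
end
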